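/- arXiv:2411.02612 — 3 statements merged into one kernel-verified Lean document; each statement's English description precedes it below -/
import Mathlib

section
/- Let f be a real-valued EO signature of arity 2n ≥ 4. Then f satisfies -ARS (f(α) = −f(ᾱ) for all α) if and only if for all distinct indices i,j, the signature f^{x_i≠x_j} = f_{ij}^{01} + f_{ij}^{10} satisfies -ARS. -/
open Finset

/-- Hamming weight of a Boolean vector. -/
def wtB {ι : Type*} [Fintype ι] (a : ι → Bool) : ℕ :=
  (Finset.univ.filter fun i => a i = true).card

/-- Componentwise XOR of three Boolean vectors. -/
def xor3 {ι : Type*} (a b c : ι → Bool) : ι → Bool :=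
  fun i => Bool.xor (a i) (Bool.xor (b i) (c i))

/-- A (support of a) signature is affine if it is nonempty and closed under α⊕β⊕γ. -/
def AffineS {ι : Type*} [Fintype ι] [DecidableEq ι] (S : Finset (ι → Bool)) : Prop :=
  S.Nonempty ∧ ∀ a ∈ S, ∀ b ∈ S, ∀ c ∈ S, xor3 a b c ∈ S

/-- Componentwise complement. -/
def cmpl {ι : Type*} (a : ι → Bool) : ι → Bool := fun i => !(a i)

/-- A real-valued EO signature vanishes on all vectors whose weight is not half the arity. -/
def IsEOR {ι : Type*} [Fintype ι] (f : (ι → Bool) → ℝ) : Prop :=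
  ∀ a, 2 * wtB a ≠ Fintype.card ι → f a = 0

/-- Arrow reversal symmetry. -/
def ARS {ι : Type*} (f : (ι → Bool) → ℝ) : Prop := ∀ a, f a = f (cmpl a)

/-- Minus arrow reversal symmetry. -/
def NegARS {ι : Type*} (f : (ι → Bool) → ℝ) : Prop := ∀ a, f a = - f (cmpl a)

/-- Extend an assignment on the variables other than `i, j` by `x_i = a`, `x_j = b`. -/
def extIJ {N : ℕ} (i j : Fin N) (a b : Bool)
    (β : {l : Fin N // l ≠ i ∧ l ≠ j} → Bool) : Fin N → Bool :=
  fun l => if h1 : l = i then a else if h2 : l = j then b else β ⟨l, h1, h2⟩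

/-- `f^{x_i ≠ x_j} = f_{ij}^{01} + f_{ij}^{10}`. -/
def neqP {N : ℕ} (f : (Fin N → Bool) → ℝ) (i j : Fin N) :
    ({l : Fin N // l ≠ i ∧ l ≠ j} → Bool) → ℝ :=
  fun β => f (extIJ i j false true β) + f (extIJ i j true false β)

/-- `f^{x_i ≠⁻ x_j} = f_{ij}^{01} - f_{ij}^{10}`. -/
def neqM {N : ℕ} (f : (Fin N → Bool) → ℝ) (i j : Fin N) :
    ({l : Fin N // l ≠ i ∧ l ≠ j} → Bool) → ℝ :=
  fun β => f (extIJ i j false true β) - f (extIJ i j true false β)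

/-!
Write `g α = f α + f ᾱ`, so that `-ARS` says `g = 0`. Unfolding the definitions, `-ARS` for
`f^{x_i ≠ x_j}` says exactly that `g α + g α' = 0` whenever `α i ≠ α j` and `α'` is `α` with
the entries `i, j` exchanged. Off weight `n`, `g` vanishes because `f` is EO. On weight `n ≥ 2`
pick `α i = α i' = 1` and `α j = 0`: exchanging along `j i`, `i i'` and `i' j` returns to `α`
after three sign changes, so `g α = -g α`.
-/

open Equiv

section Weight

variable {ι : Type*} [Fintype ι]

lemma wtB_le_card (a : ι → Bool) : wtB a ≤ Fintype.card ι :=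
  Finset.card_filter_le _ _

lemma wtB_cmpl [DecidableEq ι] (a : ι → Bool) : wtB (cmpl a) = Fintype.card ι - wtB a := by
  rw [wtB, wtB, ← Finset.card_compl]
  congr 1
  ext i
  simp [cmpl]

lemma exists_ne_of_one_lt_wtB {a : ι → Bool} (ha : 1 < wtB a) :
    ∃ i i', i ≠ i' ∧ a i = true ∧ a i' = true := by
  obtain ⟨i, hi, i', hi', hii'⟩ := Finset.one_lt_card.1 ha
  exact ⟨i, i', hii', (Finset.mem_filter.1 hi).2, (Finset.mem_filter.1 hi').2⟩

lemma exists_eq_false_of_wtB_lt_card [DecidableEq ι] {a : ι → Bool}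
    (ha : wtB a < Fintype.card ι) : ∃ j, a j = false := by
  have : 0 < wtB (cmpl a) := by rw [wtB_cmpl]; omega
  obtain ⟨j, hj⟩ := Finset.card_pos.1 this
  exact ⟨j, by simpa [cmpl] using hj⟩

end Weight

section CmplSum

variable {ι : Type*}

def cmplSum (f : (ι → Bool) → ℝ) (a : ι → Bool) : ℝ := f a + f (cmpl a)

lemma negARS_iff_cmplSum_eq_zero (f : (ι → Bool) → ℝ) : NegARS f ↔ ∀ a, cmplSum f a = 0 :=
  forall_congr' fun _ => eq_neg_iff_add_eq_zero

lemma IsEOR.cmplSum_eq_zero [Fintype ι] [DecidableEq ι] {f : (ι → Bool) → ℝ} (hf : IsEOR f)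
    {a : ι → Bool} (ha : 2 * wtB a ≠ Fintype.card ι) : cmplSum f a = 0 := by
  have hle := wtB_le_card a
  have hcmpl : 2 * wtB (cmpl a) ≠ Fintype.card ι := by rw [wtB_cmpl]; omega
  rw [cmplSum, hf a ha, hf _ hcmpl, add_zero]

lemma eq_zero_of_add_comp_swap_eq_zero [DecidableEq ι] {g : (ι → Bool) → ℝ}
    (hg : ∀ i j (a : ι → Bool), a i ≠ a j → g a + g (a ∘ swap i j) = 0)
    {a : ι → Bool} {i i' j : ι} (hi : a i = true) (hi' : a i' = true) (hii' : i ≠ i')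
    (hj : a j = false) : g a = 0 := by
  have hji : j ≠ i := fun h => by simp_all
  have hji' : j ≠ i' := fun h => by simp_all
  have h₁ := hg j i a (by simp [hi, hj])
  have h₂ := hg j i' a (by simp [hi', hj])
  have h₃ := hg i i' (a ∘ swap j i) (by
    simp [swap_apply_right, swap_apply_of_ne_of_ne hji'.symm hii'.symm, hi', hj])
  have hcomp : a ∘ swap j i ∘ swap i i' = a ∘ swap j i' := by
    funext l
    simp only [Function.comp, swap_apply_def]
    split_ifs <;> simp_all
  rw [Function.comp_assoc, hcomp] at h₃
  linarith

end CmplSum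

section Pinning

variable {N : ℕ} (i j : Fin N)

lemma cmpl_extIJ (a b : Bool) (β : {l : Fin N // l ≠ i ∧ l ≠ j} → Bool) :
    cmpl (extIJ i j a b β) = extIJ i j (!a) (!b) (cmpl β) := by
  funext l
  simp only [cmpl, extIJ]
  split_ifs <;> rfl

lemma extIJ_restrict {α : Fin N → Bool} {a b : Bool} (ha : α i = a) (hb : α j = b) :
    extIJ i j a b (fun l => α l) = α := by
  funext l
  simp only [extIJ]
  split_ifs with hi hj
  · rw [hi, ha]
  · rw [hj, hb]
  · rfl

lemma extIJ_restrict_swap {α : Fin N → Bool} {a b : Bool} (ha : α i = a) (hb : α j = b) :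
    extIJ i j b a (fun l => α l) = α ∘ swap i j := by
  funext l
  simp only [extIJ, Function.comp]
  split_ifs with hi hj
  · rw [hi, swap_apply_left, hb]
  · rw [hj, swap_apply_right, ha]
  · rw [swap_apply_of_ne_of_ne hi hj]

lemma negARS_neqP_iff (f : (Fin N → Bool) → ℝ) :
    NegARS (neqP f i j) ↔
      ∀ β, cmplSum f (extIJ i j false true β) + cmplSum f (extIJ i j true false β) = 0 := by
  rw [negARS_iff_cmplSum_eq_zero]
  refine forall_congr' fun β => ?_
  simp only [cmplSum, neqP, cmpl_extIJ, Bool.not_false, Bool.not_true]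
  constructor <;> intro h <;> linarith

lemma cmplSum_add_cmplSum_comp_swap {f : (Fin N → Bool) → ℝ} (h : NegARS (neqP f i j))
    {α : Fin N → Bool} (hα : α i ≠ α j) : cmplSum f α + cmplSum f (α ∘ swap i j) = 0 := by
  have key := (negARS_neqP_iff i j f).1 h fun l => α l
  obtain ⟨ha, hb⟩ | ⟨ha, hb⟩ : α i = false ∧ α j = true ∨ α i = true ∧ α j = false := by
    revert hα; cases α i <;> cases α j <;> simp
  · rwa [extIJ_restrict i j ha hb, extIJ_restrict_swap i j ha hb] at key
  · rw [extIJ_restrict i j ha hb, extIJ_restrict_swap i j ha hb] at key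
    linarith

end Pinning

theorem stmt14 {n : ℕ} (hn : 2 ≤ n) (f : (Fin (2 * n) → Bool) → ℝ)
    (hEO : IsEOR f) :
    NegARS f ↔ ∀ i j : Fin (2 * n), i ≠ j → NegARS (neqP f i j) := by
  constructor
  · intro hf i j _
    rw [negARS_neqP_iff]
    intro β
    simp only [(negARS_iff_cmplSum_eq_zero f).1 hf, add_zero]
  · intro h
    rw [negARS_iff_cmplSum_eq_zero]
    intro α
    by_cases hw : 2 * wtB α = Fintype.card (Fin (2 * n))
    · rw [Fintype.card_fin] at hw
      obtain ⟨i, i', hii', hi, hi'⟩ := exists_ne_of_one_lt_wtB (a := α) (by omega)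
      obtain ⟨j, hj⟩ := exists_eq_false_of_wtB_lt_card (a := α) (by rw [Fintype.card_fin]; omega)
      exact eq_zero_of_add_comp_swap_eq_zero
        (fun i j α hα => cmplSum_add_cmplSum_comp_swap i j (h i j (ne_of_apply_ne α hα)) hα)
        hi hi' hii' hj
    · exact hEO.cmplSum_eq_zero hw
end

section
/- Let f be a real-valued EO signature of arity 2n ≥ 4 such that for all distinct i,j both f^{x_i≠x_j} and f^{x_i≠⁻x_j} satisfy ARS or -ARS. Then f(α)² = f(ᾱ)² for every α ∈ 𝔽₂^{2n}. -/
/-! Put `D(α) = f(α)² - f(ᾱ)²`. If `α_i = 0` and `α_j = 1`, the symmetries of the two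
pinnings at `(i, j)` give `D(α) = -D(α ∘ (i j))`. A vector of weight `n ≥ 2` has a zero `i`
and two ones `j, k`, and the transpositions `(i j)`, `(j k)`, `(i k)` close up into a triangle,
an odd cycle along which `D` changes sign at every step; hence `D(α) = 0`. Off weight `n`,
both `f(α)` and `f(ᾱ)` vanish. -/


open Finset

lemma sq_eq_sq_cmpl_of_ARS_or_NegARS {ι : Type*} {φ : (ι → Bool) → ℝ}
    (h : ARS φ ∨ NegARS φ) (x : ι → Bool) : φ x ^ 2 = φ (cmpl x) ^ 2 := by
  rcases h with h | h <;> rw [h x]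
  ring

lemma extIJ_cmpl {N : ℕ} (i j : Fin N) (a b : Bool)
    (β : {l : Fin N // l ≠ i ∧ l ≠ j} → Bool) :
    extIJ i j a b (cmpl β) = cmpl (extIJ i j (!a) (!b) β) := by
  funext l
  simp only [extIJ, cmpl]
  split_ifs <;> simp

section Restrict

variable {N : ℕ} {i j : Fin N} {α : Fin N → Bool}

lemma extIJ_false_true_restrict (hi : α i = false) (hj : α j = true) :
    extIJ i j false true (fun l => α l.1) = α := by
  funext l
  simp only [extIJ]
  split_ifs with h1 h2
  · rw [h1, hi]
  · rw [h2, hj]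
  · rfl

lemma extIJ_true_false_restrict (hi : α i = false) (hj : α j = true) :
    extIJ i j true false (fun l => α l.1) = α ∘ Equiv.swap i j := by
  funext l
  simp only [extIJ, Function.comp_apply]
  split_ifs with h1 h2
  · rw [h1, Equiv.swap_apply_left, hj]
  · rw [h2, Equiv.swap_apply_right, hi]
  · rw [Equiv.swap_apply_of_ne_of_ne h1 h2]

end Restrict

def sqDefect {ι : Type*} (f : (ι → Bool) → ℝ) (α : ι → Bool) : ℝ :=
  f α ^ 2 - f (cmpl α) ^ 2

/-- With `β = α ∘ (i j)`, the pinned symmetries give `(f α ± f β)² = (f β̄ ± f ᾱ)²`;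
adding the two (parallelogram law) leaves `f(α)² + f(β)² = f(ᾱ)² + f(β̄)²`. -/
lemma sqDefect_add_sqDefect_comp_swap {N : ℕ} (f : (Fin N → Bool) → ℝ) {i j : Fin N}
    (hP : ARS (neqP f i j) ∨ NegARS (neqP f i j))
    (hM : ARS (neqM f i j) ∨ NegARS (neqM f i j))
    {α : Fin N → Bool} (hi : α i = false) (hj : α j = true) :
    sqDefect f α + sqDefect f (α ∘ Equiv.swap i j) = 0 := by
  have hp := sq_eq_sq_cmpl_of_ARS_or_NegARS hP fun l => α l.1
  have hm := sq_eq_sq_cmpl_of_ARS_or_NegARS hM fun l => α l.1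
  simp only [neqP, neqM, extIJ_cmpl, Bool.not_false, Bool.not_true,
    extIJ_false_true_restrict hi hj, extIJ_true_false_restrict hi hj] at hp hm
  unfold sqDefect
  linear_combination (hp + hm) / 2

lemma sqDefect_eq_zero_of_false_true_true {N : ℕ} (f : (Fin N → Bool) → ℝ)
    (hP : ∀ i j : Fin N, i ≠ j → ARS (neqP f i j) ∨ NegARS (neqP f i j))
    (hM : ∀ i j : Fin N, i ≠ j → ARS (neqM f i j) ∨ NegARS (neqM f i j))
    {α : Fin N → Bool} {i j k : Fin N} (hjk : j ≠ k)
    (hi : α i = false) (hj : α j = true) (hk : α k = true) :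
    sqDefect f α = 0 := by
  have hij : i ≠ j := by rintro rfl; simp_all
  have hik : i ≠ k := by rintro rfl; simp_all
  have hswap : α ∘ Equiv.swap i j ∘ Equiv.swap j k = α ∘ Equiv.swap i k := by
    funext l
    simp only [Function.comp_apply, Equiv.swap_apply_def]
    split_ifs <;> simp_all
  have e₁ := sqDefect_add_sqDefect_comp_swap f (hP i j hij) (hM i j hij) hi hj
  have e₂ := sqDefect_add_sqDefect_comp_swap f (hP i k hik) (hM i k hik) hi hk
  have e₃ := sqDefect_add_sqDefect_comp_swap f (hP j k hjk) (hM j k hjk)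
    (α := α ∘ Equiv.swap i j) (by simp [hi])
    (by simp [Equiv.swap_apply_of_ne_of_ne hik.symm hjk.symm, hk])
  rw [Function.comp_assoc, hswap] at e₃
  linarith

lemma wtB_cmpl_add_wtB {ι : Type*} [Fintype ι] (a : ι → Bool) :
    wtB (cmpl a) + wtB a = Fintype.card ι := by
  rw [← Finset.card_univ, ← Finset.card_filter_add_card_filter_not (p := fun i => a i = false)]
  simp [wtB, cmpl]

theorem stmt16 {n : ℕ} (hn : 2 ≤ n) (f : (Fin (2 * n) → Bool) → ℝ)
    (hEO : IsEOR f)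
    (hP : ∀ i j : Fin (2 * n), i ≠ j → ARS (neqP f i j) ∨ NegARS (neqP f i j))
    (hM : ∀ i j : Fin (2 * n), i ≠ j → ARS (neqM f i j) ∨ NegARS (neqM f i j)) :
    ∀ a : Fin (2 * n) → Bool, (f a) ^ 2 = (f (cmpl a)) ^ 2 := by
  intro a
  have hwt := wtB_cmpl_add_wtB a
  rw [Fintype.card_fin] at hwt
  by_cases hw : wtB a = n
  · obtain ⟨j, hj, k, hk, hjk⟩ := Finset.one_lt_card.mp (show 1 < wtB a by omega)
    obtain ⟨i, hi⟩ := Finset.card_pos.mp (show 0 < wtB (cmpl a) by omega)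
    simp only [cmpl, Finset.mem_filter, Finset.mem_univ, true_and, Bool.not_eq_true'] at hi hj hk
    exact sub_eq_zero.mp (sqDefect_eq_zero_of_false_true_true f hP hM hjk hi hj hk)
  · rw [hEO a (by rw [Fintype.card_fin]; omega),
      hEO (cmpl a) (by rw [Fintype.card_fin]; omega)]
end

section
/- An EO signature f satisfies the two conditions of Definition A (f = δ₁^{⊗m} ⊗ h with m ≥ 1, h of positive arity, δ₁ ∤ h, h ∉ 𝒜, and h_i^0 ∈ 𝒜 for all i) if and only if it satisfies the two conditions of Definition B (f = δ₁^{⊗m} ⊗ h with m ≥ 1, h of positive arity, δ₁ ∤ h, δ₀ ∤ h, and h_i^0 ∈ 𝒜 for all i). -/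
/-!
If some coordinate of `h` is constantly `0`, pinning it to `0` loses no information, so
`h` would be affine together with `h_i^0`; hence Definition A forces `δ₀ ∤ h`.
Conversely, an affine support with no constant coordinate is balanced in every coordinate
(`x ↦ u ⊕ v ⊕ x` swaps its two halves), so its average weight is half its arity. The EO
condition gives every `x ∈ S(h)` weight `(n - m) / 2 < n / 2`, so `h` is not affine.
-/

open Finset

/-- Pinning variable `i` of a signature to the value `a`. -/
def pinS {ι : Type*} [Fintype ι] [DecidableEq ι] (S : Finset (ι → Bool)) (i : ι) (a : Bool) :
    Finset ({j : ι // j ≠ i} → Bool) :=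
  (S.filter fun x => x i = a).image fun x j => x j.1

section

variable {ι : Type*}

@[simp]
lemma xor3_apply (a b c : ι → Bool) (i : ι) : xor3 a b c i = (a i ^^ (b i ^^ c i)) := rfl

@[simp]
lemma xor3_xor3_cancel (u v x : ι → Bool) : xor3 u v (xor3 u v x) = x := by
  funext j
  simp only [xor3_apply]
  cases u j <;> cases v j <;> simp

variable [Fintype ι]

lemma sum_wtB_eq_sum_card_filter (S : Finset (ι → Bool)) :
    ∑ x ∈ S, wtB x = ∑ i, #{x ∈ S | x i = true} := by
  simp only [wtB, card_filter]
  exact sum_comm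

variable [DecidableEq ι]

lemma mem_pinS {S : Finset (ι → Bool)} {i : ι} {a : Bool} {y : {j : ι // j ≠ i} → Bool} :
    y ∈ pinS S i a ↔ ∃ x ∈ S, x i = a ∧ (fun j : {j : ι // j ≠ i} => x j.1) = y := by
  simp [pinS, and_assoc]

lemma AffineS.of_affineS_pinS_of_forall_eq {S : Finset (ι → Bool)} {i : ι} {a : Bool}
    (hconst : ∀ x ∈ S, x i = a) (hpin : AffineS (pinS S i a)) : AffineS S := by
  obtain ⟨⟨_, hy⟩, hclosed⟩ := hpin
  refine ⟨(mem_pinS.mp hy).imp fun x hx => hx.1, fun b hb c hc d hd => ?_⟩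
  have hrestr : ∀ x ∈ S, (fun j : {j : ι // j ≠ i} => x j.1) ∈ pinS S i a :=
    fun x hx => mem_pinS.mpr ⟨x, hx, hconst x hx, rfl⟩
  obtain ⟨y, hyS, hyi, hyeq⟩ :=
    mem_pinS.mp (hclosed _ (hrestr b hb) _ (hrestr c hc) _ (hrestr d hd))
  suffices y = xor3 b c d from this ▸ hyS
  funext j
  by_cases hj : j = i
  · subst hj
    simp [hyi, hconst b hb, hconst c hc, hconst d hd]
  · exact congrFun hyeq ⟨j, hj⟩

lemma AffineS.card_filter_true_eq_card_filter_false {S : Finset (ι → Bool)} (hS : AffineS S)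
    {i : ι} (hvals : (∃ x ∈ S, x i = false) ∧ ∃ x ∈ S, x i = true) :
    #{x ∈ S | x i = true} = #{x ∈ S | x i = false} := by
  obtain ⟨⟨u, hu, hui⟩, v, hv, hvi⟩ := hvals
  have hswap : ∀ b, ∀ x ∈ {x ∈ S | x i = b}, xor3 u v x ∈ {x ∈ S | x i = !b} := by
    intro b x hx
    rw [mem_filter] at hx ⊢
    exact ⟨hS.2 u hu v hv x hx.1, by simp [hui, hvi, hx.2]⟩
  exact card_nbij' (xor3 u v) (xor3 u v) (hswap true) (hswap false)
    (fun x _ => xor3_xor3_cancel u v x) (fun x _ => xor3_xor3_cancel u v x)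

lemma AffineS.two_mul_sum_wtB {S : Finset (ι → Bool)} (hS : AffineS S)
    (hvals : ∀ i, (∃ x ∈ S, x i = false) ∧ ∃ x ∈ S, x i = true) :
    2 * ∑ x ∈ S, wtB x = Fintype.card ι * #S := by
  have hhalf : ∀ i, 2 * #{x ∈ S | x i = true} = #S := fun i => by
    rw [two_mul]
    nth_rw 2 [hS.card_filter_true_eq_card_filter_false (hvals i)]
    simpa using card_filter_add_card_filter_not (s := S) (fun x => x i = true)
  simp [sum_wtB_eq_sum_card_filter, mul_sum, hhalf]

end

/-- `f = δ₁^{⊗m} ⊗ h` is given by `m` and the support `h`; `hEO` says that every support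
vector of `f` (`m` ones followed by `x ∈ h`) has weight half the arity `m + n`. -/
theorem stmt17_general {m n : ℕ} (hm : 1 ≤ m)
    (h : Finset (Fin n → Bool)) (hne : h.Nonempty)
    (hEO : ∀ x ∈ h, 2 * (m + wtB x) = m + n) :
    ((∀ i : Fin n, ∃ x ∈ h, x i = false) ∧ ¬ AffineS h ∧
        (∀ i : Fin n, AffineS (pinS h i false)))
      ↔
    ((∀ i : Fin n, ∃ x ∈ h, x i = false) ∧ (∀ i : Fin n, ∃ x ∈ h, x i = true) ∧
        (∀ i : Fin n, AffineS (pinS h i false))) := by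
  constructor
  · rintro ⟨hfalse, hnaff, hpin⟩
    refine ⟨hfalse, fun i => ?_, hpin⟩
    by_contra hconst
    simp only [not_exists, not_and, Bool.not_eq_true] at hconst
    exact hnaff (.of_affineS_pinS_of_forall_eq hconst (hpin i))
  · rintro ⟨hfalse, htrue, hpin⟩
    refine ⟨hfalse, fun haff => ?_, hpin⟩
    have hbalanced := haff.two_mul_sum_wtB fun i => ⟨hfalse i, htrue i⟩
    have hsum : ∑ x ∈ h, 2 * (m + wtB x) = ∑ x ∈ h, (m + n) := sum_congr rfl hEO
    simp only [← mul_sum, sum_add_distrib, sum_const, smul_eq_mul, Fintype.card_fin]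
      at hsum hbalanced
    have hcard : 0 < #h := card_pos.mpr hne
    nlinarith

/-- `f = δ₁^{⊗m} ⊗ h` is an EO signature: `h` is nonempty, of positive arity `n`,
and every support vector of `f` (i.e. `m` ones followed by `x ∈ S(h)`) has weight
half of the arity `m + n`. Definition A requires `δ₁ ∤ h`, `h ∉ 𝒜` and all `h_i^0 ∈ 𝒜`;
Definition B requires `δ₁ ∤ h`, `δ₀ ∤ h` and all `h_i^0 ∈ 𝒜`. -/
theorem stmt17 {m n : ℕ} (hm : 1 ≤ m) (hn : 1 ≤ n)
    (h : Finset (Fin n → Bool)) (hne : h.Nonempty)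
    (hEO : ∀ x ∈ h, 2 * (m + wtB x) = m + n) :
    ((∀ i : Fin n, ∃ x ∈ h, x i = false) ∧ ¬ AffineS h ∧
        (∀ i : Fin n, AffineS (pinS h i false)))
      ↔
    ((∀ i : Fin n, ∃ x ∈ h, x i = false) ∧ (∀ i : Fin n, ∃ x ∈ h, x i = true) ∧
        (∀ i : Fin n, AffineS (pinS h i false))) :=
  stmt17_general hm h hne hEO
end
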